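/- Let c > 0. The function L_c(x,y) = −(c/2)·x·∑_{m=0}^∞ (−1)^m (c(x² − y²)/4)^m / (m!·(m+1)!) satisfies, for all (x,y) ∈ ℝ²: ∂²L_c/∂x²(x,y) − ∂²L_c/∂y²(x,y) + c·L_c(x,y) = 0; and for all x ∈ ℝ: ∂L_c/∂y(x,0) = 0 and L_c(x,x) = −(c/2)·x. (In particular, L_c solves the inverse backstepping kernel equation ℓ_xx − ℓ_yy + c·ℓ = 0 on 0 < y < x < 1 with ℓ_y(x,0) = 0 and ℓ(x,x) = −cx/2.) -/

import Mathlib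

/-!
Writing `f(t) = ∑ (-1)^m t^m / (m! (m+1)!)`, so that `L_c(x,y) = -(c/2) x f(c(x²-y²)/4)`, the chain
rule gives `∂²ₓL - ∂²ᵧL + cL = -(c²/2) x (w f''(w) + 2 f'(w) + f(w))` with `w = c(x²-y²)/4`, and the
bracket vanishes because the coefficients `a_m` of `f` satisfy `(m+1)(m+2) a_{m+1} = -a_m`. The boundary
conditions come from `∂ᵧL` carrying a factor `y` and from `f(0) = 1`. Termwise differentiation of
`f` is justified by the bound `|a_m| ≤ 1/m!`.
-/

/-- The inverse backstepping kernel
`L_c(x,y) = −(c/2)·x·∑_{m=0}^∞ (−1)^m (c(x²−y²)/4)^m / (m!·(m+1)!)`. -/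
noncomputable def Lker (c x y : ℝ) : ℝ :=
  -(c / 2) * x * ∑' m : ℕ, (-1 : ℝ) ^ m * (c * (x ^ 2 - y ^ 2) / 4) ^ m /
    ((Nat.factorial m : ℝ) * (Nat.factorial (m + 1) : ℝ))

/-- Partial derivative in the first variable. -/
noncomputable def pdx (f : ℝ → ℝ → ℝ) (x y : ℝ) : ℝ := deriv (fun x' => f x' y) x

/-- Partial derivative in the second variable. -/
noncomputable def pdy (f : ℝ → ℝ → ℝ) (x y : ℝ) : ℝ := deriv (fun y' => f x y') y

open scoped Nat

noncomputable def powerSeriesSum (b : ℕ → ℝ) (t : ℝ) : ℝ := ∑' m : ℕ, b m * t ^ m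

def derivCoeff (b : ℕ → ℝ) (m : ℕ) : ℝ := (m + 1) * b (m + 1)

def FactorialBounded (b : ℕ → ℝ) : Prop := ∃ K r : ℝ, 0 ≤ r ∧ ∀ m, |b m| ≤ K * r ^ m / m !

theorem powerSeriesSum_zero (b : ℕ → ℝ) : powerSeriesSum b 0 = b 0 := by
  rw [powerSeriesSum, tsum_eq_single 0 fun m hm => by rw [zero_pow hm, mul_zero], pow_zero,
    mul_one]

namespace FactorialBounded

variable {b : ℕ → ℝ}

theorem summable_norm (hb : FactorialBounded b) (t : ℝ) : Summable fun m => ‖b m * t ^ m‖ := by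
  obtain ⟨K, r, -, hb⟩ := hb
  refine .of_nonneg_of_le (fun m => norm_nonneg _) (fun m => ?_)
    ((Real.summable_pow_div_factorial (r * |t|)).mul_left K)
  calc ‖b m * t ^ m‖ = |b m| * |t| ^ m := by rw [Real.norm_eq_abs, abs_mul, abs_pow]
    _ ≤ K * r ^ m / m ! * |t| ^ m := by gcongr; exact hb m
    _ = K * ((r * |t|) ^ m / m !) := by rw [mul_pow]; ring

theorem summable (hb : FactorialBounded b) (t : ℝ) : Summable fun m => b m * t ^ m :=
  (hb.summable_norm t).of_norm

theorem derivCoeff (hb : FactorialBounded b) : FactorialBounded (derivCoeff b) := by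
  obtain ⟨K, r, hr, hb⟩ := hb
  refine ⟨K * r, r, hr, fun m => ?_⟩
  have hfac : ((m + 1)! : ℝ) = (m + 1) * m ! := by push_cast [Nat.factorial_succ]; ring
  calc |_root_.derivCoeff b m| = (m + 1) * |b (m + 1)| := by
        rw [_root_.derivCoeff, abs_mul, abs_of_pos (by positivity)]
    _ ≤ (m + 1) * (K * r ^ (m + 1) / (m + 1)!) := by gcongr; exact hb _
    _ = K * r * r ^ m / m ! := by rw [hfac, pow_succ]; field_simp

theorem natCast_mul (hb : FactorialBounded b) : FactorialBounded fun m => m * b m := by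
  obtain ⟨K, r, hr, hb⟩ := hb
  refine ⟨K, 2 * r, by positivity, fun m => ?_⟩
  have hm : (m : ℝ) ≤ 2 ^ m := by exact_mod_cast Nat.lt_two_pow_self.le
  calc |(m : ℝ) * b m| = m * |b m| := by rw [abs_mul, Nat.abs_cast]
    _ ≤ 2 ^ m * (K * r ^ m / m !) := mul_le_mul hm (hb m) (abs_nonneg _) (by positivity)
    _ = K * (2 * r) ^ m / m ! := by rw [mul_pow]; ring

theorem hasDerivAt (hb : FactorialBounded b) (t : ℝ) :
    HasDerivAt (powerSeriesSum b) (powerSeriesSum (_root_.derivCoeff b) t) t := by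
  set R := |t| + 1
  have hR : 1 ≤ R := by simp [R]
  have ht : t ∈ Metric.ball (0 : ℝ) R := by simp [R]
  have hbound : ∀ m x, x ∈ Metric.ball (0 : ℝ) R →
      ‖b m * (m * x ^ (m - 1))‖ ≤ ‖(m * b m) * R ^ m‖ := by
    intro m x hx
    have hxR : |x| ≤ R := (mem_ball_zero_iff.mp hx).le
    calc ‖b m * (m * x ^ (m - 1))‖ = |m * b m| * |x| ^ (m - 1) := by
          rw [Real.norm_eq_abs, abs_mul, abs_mul, abs_pow, abs_mul]; ring
      _ ≤ |m * b m| * R ^ m := by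
          gcongr
          exact (pow_le_pow_left₀ (abs_nonneg x) hxR _).trans
            (pow_le_pow_right₀ hR (Nat.sub_le m 1))
      _ = ‖(m * b m) * R ^ m‖ := by
          rw [Real.norm_eq_abs, abs_mul _ (R ^ m),
            abs_of_nonneg (pow_nonneg (zero_le_one.trans hR) m)]
  have hu := hb.natCast_mul.summable_norm R
  have hshift : powerSeriesSum (_root_.derivCoeff b) t = ∑' m : ℕ, b m * (m * t ^ (m - 1)) := by
    rw [(hu.of_norm_bounded fun m => hbound m t ht).tsum_eq_zero_add, powerSeriesSum]
    simp only [Nat.cast_zero, zero_mul, mul_zero, zero_add]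
    exact tsum_congr fun m => by simp only [_root_.derivCoeff]; push_cast; ring
  rw [hshift]
  exact hasDerivAt_tsum_of_isPreconnected hu Metric.isOpen_ball
    (convex_ball (0 : ℝ) R).isPreconnected (fun m x _ => (hasDerivAt_pow m x).const_mul (b m))
    hbound ht (hb.summable t) ht

theorem mul_powerSeriesSum_derivCoeff (hb : FactorialBounded b) (t : ℝ) :
    t * powerSeriesSum (_root_.derivCoeff b) t = powerSeriesSum (fun m => m * b m) t := by
  rw [powerSeriesSum, powerSeriesSum, (hb.natCast_mul.summable t).tsum_eq_zero_add,
    ← tsum_mul_left]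
  simp only [Nat.cast_zero, zero_mul, zero_add]
  exact tsum_congr fun m => by simp only [_root_.derivCoeff]; push_cast; ring

end FactorialBounded

/-- `powerSeriesSum besselCoeff t = J₁(2√t)/√t` for `t > 0`. -/
noncomputable def besselCoeff (m : ℕ) : ℝ := (-1) ^ m / (m ! * (m + 1)!)

theorem factorialBounded_besselCoeff : FactorialBounded besselCoeff := by
  refine ⟨1, 1, zero_le_one, fun m => ?_⟩
  have hm1 : (1 : ℝ) ≤ (m + 1)! := by
    exact_mod_cast Nat.one_le_iff_ne_zero.2 (Nat.factorial_ne_zero _)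
  simp only [besselCoeff, one_pow, one_mul, abs_div, abs_pow, abs_neg, abs_one]
  rw [abs_of_pos (by positivity)]
  exact one_div_le_one_div_of_le (by positivity) (le_mul_of_one_le_right (by positivity) hm1)

theorem besselCoeff_succ (m : ℕ) :
    (m + 1) * (m + 2) * besselCoeff (m + 1) = -besselCoeff m := by
  have h1 : ((m + 1)! : ℝ) = (m + 1) * m ! := by push_cast [Nat.factorial_succ]; ring
  have h2 : ((m + 1 + 1)! : ℝ) = (m + 2) * ((m + 1) * m !) := by
    rw [Nat.factorial_succ (m + 1)]; push_cast [Nat.factorial_succ]; ring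
  simp only [besselCoeff]
  rw [h2, h1, pow_succ]
  field_simp

theorem besselSeries_ode (t : ℝ) :
    t * powerSeriesSum (derivCoeff (derivCoeff besselCoeff)) t
      + 2 * powerSeriesSum (derivCoeff besselCoeff) t + powerSeriesSum besselCoeff t = 0 := by
  have hb := factorialBounded_besselCoeff
  have h1 := hb.derivCoeff.natCast_mul.summable t
  have h2 := (hb.derivCoeff.summable t).mul_left 2
  rw [hb.derivCoeff.mul_powerSeriesSum_derivCoeff]
  simp only [powerSeriesSum]
  rw [← tsum_mul_left, ← h1.tsum_add h2, ← (h1.add h2).tsum_add (hb.summable t)]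
  refine (tsum_congr fun m => ?_).trans tsum_zero
  simp only [derivCoeff]
  linear_combination t ^ m * besselCoeff_succ m

noncomputable def kernelOfProfile (c : ℝ) (f : ℝ → ℝ) (x y : ℝ) : ℝ :=
  -(c / 2) * x * f (c * (x ^ 2 - y ^ 2) / 4)

theorem Lker_eq_kernelOfProfile (c : ℝ) :
    Lker c = kernelOfProfile c (powerSeriesSum besselCoeff) := by
  ext x y
  rw [Lker, kernelOfProfile, powerSeriesSum]
  congr 1
  exact tsum_congr fun m => by rw [besselCoeff]; ring

theorem hasDerivAt_sub_sq_left (c y x : ℝ) :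
    HasDerivAt (fun x => c * (x ^ 2 - y ^ 2) / 4) (c * x / 2) x := by
  refine ((((hasDerivAt_pow 2 x).sub_const (y ^ 2)).const_mul c).div_const 4).congr_deriv ?_
  push_cast
  ring

theorem hasDerivAt_sub_sq_right (c x y : ℝ) :
    HasDerivAt (fun y => c * (x ^ 2 - y ^ 2) / 4) (-(c * y / 2)) y := by
  refine ((((hasDerivAt_pow 2 y).const_sub (x ^ 2)).const_mul c).div_const 4).congr_deriv ?_
  push_cast
  ring

section KernelOfProfile

variable {c : ℝ} {f f' f'' : ℝ → ℝ}

theorem pdx_kernelOfProfile (hf : ∀ t, HasDerivAt f (f' t) t) :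
    pdx (kernelOfProfile c f) = fun x y =>
      -(c / 2) * f (c * (x ^ 2 - y ^ 2) / 4)
        - c ^ 2 / 4 * x ^ 2 * f' (c * (x ^ 2 - y ^ 2) / 4) := by
  ext x y
  refine HasDerivAt.deriv ?_
  refine (((hasDerivAt_id x).const_mul (-(c / 2))).mul
    ((hf _).comp x (hasDerivAt_sub_sq_left c y x))).congr_deriv ?_
  simp only [id_eq, Function.comp_apply]
  ring

theorem pdx_pdx_kernelOfProfile (hf : ∀ t, HasDerivAt f (f' t) t)
    (hf' : ∀ t, HasDerivAt f' (f'' t) t) (x y : ℝ) :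
    pdx (pdx (kernelOfProfile c f)) x y =
      -(3 * c ^ 2 / 4) * x * f' (c * (x ^ 2 - y ^ 2) / 4)
        - c ^ 3 / 8 * x ^ 3 * f'' (c * (x ^ 2 - y ^ 2) / 4) := by
  rw [pdx_kernelOfProfile hf]
  refine HasDerivAt.deriv ?_
  refine ((((hf _).comp x (hasDerivAt_sub_sq_left c y x)).const_mul (-(c / 2))).sub
    (((hasDerivAt_pow 2 x).const_mul (c ^ 2 / 4)).mul
      ((hf' _).comp x (hasDerivAt_sub_sq_left c y x)))).congr_deriv ?_
  simp only [Function.comp_apply]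
  push_cast
  ring

theorem pdy_kernelOfProfile (hf : ∀ t, HasDerivAt f (f' t) t) :
    pdy (kernelOfProfile c f) = fun x y =>
      c ^ 2 / 4 * x * y * f' (c * (x ^ 2 - y ^ 2) / 4) := by
  ext x y
  refine HasDerivAt.deriv ?_
  refine (((hf _).comp y (hasDerivAt_sub_sq_right c x y)).const_mul (-(c / 2) * x)).congr_deriv
    ?_
  ring

theorem pdy_pdy_kernelOfProfile (hf : ∀ t, HasDerivAt f (f' t) t)
    (hf' : ∀ t, HasDerivAt f' (f'' t) t) (x y : ℝ) :
    pdy (pdy (kernelOfProfile c f)) x y =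
      c ^ 2 / 4 * x * f' (c * (x ^ 2 - y ^ 2) / 4)
        - c ^ 3 / 8 * x * y ^ 2 * f'' (c * (x ^ 2 - y ^ 2) / 4) := by
  rw [pdy_kernelOfProfile hf]
  refine HasDerivAt.deriv ?_
  refine (((hasDerivAt_id y).const_mul (c ^ 2 / 4 * x)).mul
    ((hf' _).comp y (hasDerivAt_sub_sq_right c x y))).congr_deriv ?_
  simp only [id_eq, Function.comp_apply]
  ring

theorem kernelOfProfile_wave (hf : ∀ t, HasDerivAt f (f' t) t)
    (hf' : ∀ t, HasDerivAt f' (f'' t) t) (hode : ∀ t, t * f'' t + 2 * f' t + f t = 0) (x y : ℝ) :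
    pdx (pdx (kernelOfProfile c f)) x y - pdy (pdy (kernelOfProfile c f)) x y
      + c * kernelOfProfile c f x y = 0 := by
  rw [pdx_pdx_kernelOfProfile hf hf', pdy_pdy_kernelOfProfile hf hf', kernelOfProfile]
  linear_combination (-(c ^ 2 / 2) * x) * hode (c * (x ^ 2 - y ^ 2) / 4)

theorem pdy_kernelOfProfile_zero (hf : ∀ t, HasDerivAt f (f' t) t) (x : ℝ) :
    pdy (kernelOfProfile c f) x 0 = 0 := by
  rw [pdy_kernelOfProfile hf]
  ring

theorem kernelOfProfile_diag (x : ℝ) : kernelOfProfile c f x x = -(c / 2) * x * f 0 := by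
  rw [kernelOfProfile, sub_self, mul_zero, zero_div]

end KernelOfProfile

theorem Lker_solves_inverse_kernel_equation_general (c : ℝ) :
    (∀ x y : ℝ,
      pdx (pdx (Lker c)) x y - pdy (pdy (Lker c)) x y + c * Lker c x y = 0) ∧
    (∀ x : ℝ, pdy (Lker c) x 0 = 0) ∧
    (∀ x : ℝ, Lker c x x = -(c / 2) * x) := by
  have hb := factorialBounded_besselCoeff
  have hf := hb.hasDerivAt
  rw [Lker_eq_kernelOfProfile]
  refine ⟨kernelOfProfile_wave hf hb.derivCoeff.hasDerivAt besselSeries_ode,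
    pdy_kernelOfProfile_zero hf, fun x => ?_⟩
  rw [kernelOfProfile_diag, powerSeriesSum_zero, besselCoeff]
  norm_num

/-- the kernel `L_c` solves the inverse backstepping kernel equation
`ℓ_xx − ℓ_yy + c·ℓ = 0` with `ℓ_y(x,0) = 0` and `ℓ(x,x) = −cx/2`. -/
theorem Lker_solves_inverse_kernel_equation (c : ℝ) (hc : c > 0) :
    (∀ x y : ℝ,
      pdx (pdx (Lker c)) x y - pdy (pdy (Lker c)) x y + c * Lker c x y = 0) ∧
    (∀ x : ℝ, pdy (Lker c) x 0 = 0) ∧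
    (∀ x : ℝ, Lker c x x = -(c / 2) * x) :=
  Lker_solves_inverse_kernel_equation_general c
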